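/- Let γ ∈ (0,2), Q = γ/2 + 2/γ, and let α₁, α₂, α₃ be real numbers with ᾱ = α₁ + α₂ + α₃. Set (corresponding to the degenerate weight α₀ = −γ/2): a = (−γ/4)(Q + γ − ᾱ) − 1/2, b = (−γ/4)(Q − α₁ − α₂ + α₃) + 1/2, c = 1 − (γ/2)(Q − α₁), and A = − Γ(c)² Γ(1−a) Γ(1−b) Γ(a−c+1) Γ(b−c+1) / ( Γ(2−c)² Γ(c−a) Γ(c−b) Γ(a) Γ(b) ). Assume none of the Gamma functions appearing on either side below is evaluated at a nonpositive integer. Then A = l(γα₁/2 − γ²/4) · l((γ/4)(ᾱ − 2α₁ − γ/2)) / ( l(2 + γ²/4 − γα₁/2) · l((γ/4)(ᾱ − γ/2 − 2Q)) · l((γ/4)(ᾱ − 2α₂ − γ/2)) · l((γ/4)(ᾱ − 2α₃ − γ/2)) ). -/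

import Mathlib

/-- The special function `l(x) = Γ(x)/Γ(1-x)`. -/
noncomputable def lr (x : ℝ) : ℝ := Real.Gamma x / Real.Gamma (1 - x)

/-!
Every Gamma factor of `A` pairs off into an `l`-value except `Γ(c)²/Γ(2-c)²`, and the
functional equation `Γ(s+1) = sΓ(s)` at `s = c - 1` and `s = 1 - c` turns that into
`-l(c)/l(2-c)`. For the degenerate weight `-γ/2` the six resulting arguments
`c, a - c + 1, 2 - c, a, c - b, b` are exactly those of `l` in the shift equation.
-/

open Real

noncomputable def connectionCoeff (a b c : ℝ) : ℝ :=
  -(Gamma c ^ 2 * Gamma (1 - a) * Gamma (1 - b) * Gamma (a - c + 1) * Gamma (b - c + 1))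
    / (Gamma (2 - c) ^ 2 * Gamma (c - a) * Gamma (c - b) * Gamma a * Gamma b)

theorem Gamma_sub_one_div_Gamma_one_sub {u : ℝ} (hu : u ≠ 1) :
    Gamma (u - 1) / Gamma (1 - u) = -(Gamma u / Gamma (2 - u)) := by
  have hu_sub : u - 1 ≠ 0 := sub_ne_zero.mpr hu
  have hsub_u : 1 - u ≠ 0 := sub_ne_zero.mpr hu.symm
  have shift_up : Gamma u = (u - 1) * Gamma (u - 1) := by
    simpa using Gamma_add_one hu_sub
  have shift_down : Gamma (2 - u) = (1 - u) * Gamma (1 - u) := by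
    rw [show 2 - u = 1 - u + 1 by ring, Gamma_add_one hsub_u]
  have ratio : (u - 1) / (1 - u) = -1 := by rw [← neg_sub, neg_div, div_self hsub_u]
  rw [shift_up, shift_down, mul_div_mul_comm, ratio, neg_one_mul, neg_neg]

theorem lr_div_lr_two_sub {u : ℝ} (hu : u ≠ 1) :
    lr u / lr (2 - u) = -(Gamma u / Gamma (2 - u)) ^ 2 := by
  have h := Gamma_sub_one_div_Gamma_one_sub hu
  calc lr u / lr (2 - u)
      = Gamma u / Gamma (2 - u) * (Gamma (u - 1) / Gamma (1 - u)) := by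
        rw [lr, lr, show 1 - (2 - u) = u - 1 by ring]
        simp only [div_eq_mul_inv, mul_inv, inv_inv]; ring
    _ = -(Gamma u / Gamma (2 - u)) ^ 2 := by rw [h]; ring

theorem connectionCoeff_eq_lr {a b c : ℝ} (hc : c ≠ 1) :
    connectionCoeff a b c = lr c * lr (a - c + 1) / (lr (2 - c) * lr a * lr (c - b) * lr b) := by
  have h := lr_div_lr_two_sub hc
  calc connectionCoeff a b c
      = -(Gamma c / Gamma (2 - c)) ^ 2 * (lr (a - c + 1) / (lr a * lr (c - b) * lr b)) := by
        rw [connectionCoeff, lr, lr, lr, lr, show 1 - (a - c + 1) = c - a by ring,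
          show 1 - (c - b) = b - c + 1 by ring]
        simp only [div_eq_mul_inv, mul_inv, inv_inv]; ring
    _ = lr c * lr (a - c + 1) / (lr (2 - c) * lr a * lr (c - b) * lr b) := by rw [← h]; ring

theorem connection_coefficient_first (γ α₁ α₂ α₃ : ℝ) (hγ : γ ∈ Set.Ioo (0:ℝ) 2)
    (a b c A : ℝ)
    (ha : a = (-γ/4) * ((γ/2 + 2/γ) + γ - (α₁ + α₂ + α₃)) - 1/2)
    (hb : b = (-γ/4) * ((γ/2 + 2/γ) - α₁ - α₂ + α₃) + 1/2)
    (hc : c = 1 - (γ/2) * ((γ/2 + 2/γ) - α₁))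
    (hA : A = -(Real.Gamma c ^ 2 * Real.Gamma (1 - a) * Real.Gamma (1 - b)
          * Real.Gamma (a - c + 1) * Real.Gamma (b - c + 1))
        / (Real.Gamma (2 - c) ^ 2 * Real.Gamma (c - a) * Real.Gamma (c - b)
          * Real.Gamma a * Real.Gamma b))
    (hΓ : ∀ x ∈ ([c, 1 - a, 1 - b, a - c + 1, b - c + 1, 2 - c, c - a, c - b, a, b,
        γ*α₁/2 - γ^2/4, 1 - (γ*α₁/2 - γ^2/4),
        (γ/4)*((α₁+α₂+α₃) - 2*α₁ - γ/2), 1 - (γ/4)*((α₁+α₂+α₃) - 2*α₁ - γ/2),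
        2 + γ^2/4 - γ*α₁/2, 1 - (2 + γ^2/4 - γ*α₁/2),
        (γ/4)*((α₁+α₂+α₃) - γ/2 - 2*(γ/2 + 2/γ)),
        1 - (γ/4)*((α₁+α₂+α₃) - γ/2 - 2*(γ/2 + 2/γ)),
        (γ/4)*((α₁+α₂+α₃) - 2*α₂ - γ/2), 1 - (γ/4)*((α₁+α₂+α₃) - 2*α₂ - γ/2),
        (γ/4)*((α₁+α₂+α₃) - 2*α₃ - γ/2), 1 - (γ/4)*((α₁+α₂+α₃) - 2*α₃ - γ/2)] : List ℝ),
      ∀ m : ℕ, x ≠ -(m:ℝ)) :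
    A = lr (γ*α₁/2 - γ^2/4) * lr ((γ/4)*((α₁+α₂+α₃) - 2*α₁ - γ/2))
        / (lr (2 + γ^2/4 - γ*α₁/2) * lr ((γ/4)*((α₁+α₂+α₃) - γ/2 - 2*(γ/2 + 2/γ)))
          * lr ((γ/4)*((α₁+α₂+α₃) - 2*α₂ - γ/2))
          * lr ((γ/4)*((α₁+α₂+α₃) - 2*α₃ - γ/2))) := by
  have hγ0 : γ ≠ 0 := hγ.1.ne'
  have hc_eq : c = γ*α₁/2 - γ^2/4 := by rw [hc]; field_simp; ring
  have hc_ne_one : c ≠ 1 := by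
    have h := hΓ (1 - (γ*α₁/2 - γ^2/4)) (by simp) 0
    rw [← hc_eq] at h
    exact fun h1 => h (by simp [h1])
  have ha_sub_c : a - c + 1 = (γ/4)*((α₁+α₂+α₃) - 2*α₁ - γ/2) := by
    rw [ha, hc]; field_simp; ring
  have htwo_sub_c : 2 - c = 2 + γ^2/4 - γ*α₁/2 := by rw [hc_eq]; ring
  have ha_eq : a = (γ/4)*((α₁+α₂+α₃) - γ/2 - 2*(γ/2 + 2/γ)) := by rw [ha]; field_simp; ring
  have hc_sub_b : c - b = (γ/4)*((α₁+α₂+α₃) - 2*α₂ - γ/2) := by rw [hb, hc]; field_simp; ring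
  have hb_eq : b = (γ/4)*((α₁+α₂+α₃) - 2*α₃ - γ/2) := by rw [hb]; field_simp; ring
  rw [show A = connectionCoeff a b c from hA, connectionCoeff_eq_lr hc_ne_one,
    ha_sub_c, htwo_sub_c, hc_sub_b, ha_eq, hb_eq, hc_eq]
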